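/- Let (X_n)_{n∈ℕ} be a sequence of Banach spaces each belonging to the class Sp(U⁻¹∘K). Then the c₀-sum c₀(X_n) = { (x_n)_{n∈ℕ} : x_n ∈ X_n and ‖x_n‖ → 0 }, with the supremum norm, belongs to the class Sp(U⁻¹∘K). -/

import Mathlib

open Filter Topology Metric

noncomputable section

universe u

/-- The Banach space `c₀` of real sequences converging to `0`, with the sup norm,
realized as the zero-at-infinity continuous functions on `ℕ`. -/
abbrev SeqC0 : Type := ZeroAtInftyContinuousMap ℕ ℝ

/-- The Banach space `ℓ₁` of absolutely summable real sequences. -/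
abbrev SeqL1 : Type := lp (fun _ : ℕ => ℝ) 1

/-- A Banach space is subprojective if every infinite-dimensional closed subspace
contains an infinite-dimensional closed subspace complemented in the whole space. -/
def Subprojective (X : Type*) [NormedAddCommGroup X] [NormedSpace ℝ X] : Prop :=
  ∀ M : Submodule ℝ X, IsClosed (M : Set X) → ¬FiniteDimensional ℝ M →
    ∃ N : Submodule ℝ X, N ≤ M ∧ IsClosed (N : Set X) ∧ ¬FiniteDimensional ℝ N ∧
      N.ClosedComplemented

/-- A Banach space is superprojective if every closed subspace of infinite codimension
is contained in a closed subspace of infinite codimension complemented in the whole space. -/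
def Superprojective (X : Type*) [NormedAddCommGroup X] [NormedSpace ℝ X] : Prop :=
  ∀ M : Submodule ℝ X, IsClosed (M : Set X) → ¬FiniteDimensional ℝ (X ⧸ M) →
    ∃ N : Submodule ℝ X, M ≤ N ∧ IsClosed (N : Set X) ∧ ¬FiniteDimensional ℝ (X ⧸ N) ∧
      N.ClosedComplemented

section Operators

variable {X Y : Type*} [NormedAddCommGroup X] [NormedSpace ℝ X]
  [NormedAddCommGroup Y] [NormedSpace ℝ Y]

/-- The restriction of `T` to the subspace `M` is an isomorphism onto its image,
i.e. `T` is bounded below on `M`. -/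
def IsIsoOn (T : X →L[ℝ] Y) (M : Submodule ℝ X) : Prop :=
  ∃ c > 0, ∀ x ∈ M, c * ‖x‖ ≤ ‖T x‖

/-- An operator is improjective if there is no infinite-dimensional closed subspace `M`
such that the restriction of `T` to `M` is an isomorphism onto `T(M)` and `T(M)` is
complemented in the target space. -/
def Improjective (T : X →L[ℝ] Y) : Prop :=
  ¬ ∃ M : Submodule ℝ X, IsClosed (M : Set X) ∧ ¬FiniteDimensional ℝ M ∧
      IsIsoOn T M ∧ (M.map (T : X →ₗ[ℝ] Y)).ClosedComplemented

/-- An operator is strictly singular if there is no infinite-dimensional closed subspace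
on which it is an isomorphism onto its image. -/
def StrictlySingular (T : X →L[ℝ] Y) : Prop :=
  ¬ ∃ M : Submodule ℝ X, IsClosed (M : Set X) ∧ ¬FiniteDimensional ℝ M ∧ IsIsoOn T M

/-- An operator is strictly cosingular if there is no closed infinite-codimensional
subspace `N` of the target such that the composition with the quotient map onto `Y/N`
is surjective. -/
def StrictlyCosingular (T : X →L[ℝ] Y) : Prop :=
  ¬ ∃ N : Submodule ℝ Y, IsClosed (N : Set Y) ∧ ¬FiniteDimensional ℝ (Y ⧸ N) ∧
      Function.Surjective (fun x : X => (Submodule.Quotient.mk (T x) : Y ⧸ N))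

/-- An injection: an isomorphic embedding with infinite-dimensional range. -/
def IsInjection (T : X →L[ℝ] Y) : Prop :=
  (∃ c > 0, ∀ x : X, c * ‖x‖ ≤ ‖T x‖) ∧ ¬FiniteDimensional ℝ (LinearMap.range (T : X →ₗ[ℝ] Y))

/-- A surjection: a surjective operator with infinite-dimensional range. -/
def IsSurjection (T : X →L[ℝ] Y) : Prop :=
  Function.Surjective T ∧ ¬FiniteDimensional ℝ Y

/-- A sequence converges weakly to `x₀`. -/
def WeakTendsto (x : ℕ → X) (x₀ : X) : Prop :=
  ∀ f : X →L[ℝ] ℝ, Tendsto (fun n => f (x n)) atTop (𝓝 (f x₀))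

/-- A set is relatively weakly compact if its closure in the weak topology is compact. -/
def RelWeaklyCompact (s : Set X) : Prop :=
  IsCompact (closure ((toWeakSpace ℝ X) '' s))

/-- A weakly compact operator: the image of the closed unit ball is relatively
weakly compact. -/
def WeaklyCompactOp (T : X →L[ℝ] Y) : Prop :=
  RelWeaklyCompact (T '' Metric.closedBall 0 1)

/-- A compact operator: the image of the closed unit ball is relatively norm compact. -/
def CompactOp (T : X →L[ℝ] Y) : Prop :=
  IsCompact (closure (T '' Metric.closedBall 0 1))

/-- An unconditionally converging operator: there is no closed subspace isomorphic to `c₀`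
on which the operator is an isomorphism onto its image. -/
def UnconditionallyConverging (T : X →L[ℝ] Y) : Prop :=
  ¬ ∃ M : Submodule ℝ X, IsClosed (M : Set X) ∧ Nonempty (M ≃L[ℝ] SeqC0) ∧ IsIsoOn T M

end Operators

/-- The Dunford-Pettis property: every weakly compact operator into a Banach space takes
weakly convergent sequences to norm convergent sequences. -/
def DunfordPettis (X : Type u) [NormedAddCommGroup X] [NormedSpace ℝ X] : Prop :=
  ∀ (Y : Type u) [NormedAddCommGroup Y] [NormedSpace ℝ Y] [CompleteSpace Y],
    ∀ T : X →L[ℝ] Y, WeaklyCompactOp T →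
      ∀ (x : ℕ → X) (x₀ : X), WeakTendsto x x₀ →
        Tendsto (fun n => T (x n)) atTop (𝓝 (T x₀))

/-- A Banach space is reflexive if the canonical embedding into its double dual
is surjective. -/
def ReflexiveSpace (X : Type*) [SeminormedAddCommGroup X] [NormedSpace ℝ X] : Prop :=
  Function.Surjective (NormedSpace.inclusionInDoubleDual ℝ X)

/-- The Schur property: weakly convergent sequences are norm convergent. -/
def SchurProperty (X : Type*) [NormedAddCommGroup X] [NormedSpace ℝ X] : Prop :=
  ∀ (x : ℕ → X) (x₀ : X), WeakTendsto x x₀ → Tendsto x atTop (𝓝 x₀)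

/-- `X` is hereditarily `Z`: every infinite-dimensional closed subspace of `X` contains a
closed subspace isomorphic to `Z`. -/
def Hereditarily (Z : Type*) [NormedAddCommGroup Z] [NormedSpace ℝ Z]
    (X : Type*) [NormedAddCommGroup X] [NormedSpace ℝ X] : Prop :=
  ∀ M : Submodule ℝ X, IsClosed (M : Set X) → ¬FiniteDimensional ℝ M →
    ∃ N : Submodule ℝ X, N ≤ M ∧ IsClosed (N : Set X) ∧ Nonempty (N ≃L[ℝ] Z)

/-- Property (V): every unconditionally converging operator from `X` into a Banach space
is weakly compact. -/
def PropertyV (X : Type u) [NormedAddCommGroup X] [NormedSpace ℝ X] : Prop :=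
  ∀ (Y : Type u) [NormedAddCommGroup Y] [NormedSpace ℝ Y] [CompleteSpace Y],
    ∀ T : X →L[ℝ] Y, UnconditionallyConverging T → WeaklyCompactOp T

/-- The class `Sp(U⁻¹∘K)`: every unconditionally converging operator from `X` into a
Banach space is compact. -/
def MemSpUK (X : Type u) [NormedAddCommGroup X] [NormedSpace ℝ X] : Prop :=
  ∀ (Y : Type u) [NormedAddCommGroup Y] [NormedSpace ℝ Y] [CompleteSpace Y],
    ∀ T : X →L[ℝ] Y, UnconditionallyConverging T → CompactOp T

/-- `X` is an `L_{p,λ}`-space: every finite-dimensional subspace is contained in a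
finite-dimensional subspace `E` whose Banach-Mazur distance to `ℓ_p^{dim E}`
(realized as `PiLp p (fun _ : Fin (dim E) => ℝ)`) is at most `λ`. -/
def IsLpLambdaSpace (p : ENNReal) [Fact (1 ≤ p)] (lam : ℝ)
    (X : Type*) [NormedAddCommGroup X] [NormedSpace ℝ X] : Prop :=
  ∀ F : Submodule ℝ X, FiniteDimensional ℝ F →
    ∃ E : Submodule ℝ X, F ≤ E ∧ FiniteDimensional ℝ E ∧
      ∃ T : E ≃L[ℝ] PiLp p (fun _ : Fin (Module.finrank ℝ E) => ℝ),
        ‖(T : E →L[ℝ] PiLp p (fun _ : Fin (Module.finrank ℝ E) => ℝ))‖ *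
          ‖(T.symm : PiLp p (fun _ : Fin (Module.finrank ℝ E) => ℝ) →L[ℝ] E)‖ ≤ lam

/-- `X` is an `L_p`-space if it is an `L_{p,λ}`-space for some `λ ≥ 1`. -/
def IsLpSpace (p : ENNReal) [Fact (1 ≤ p)]
    (X : Type*) [NormedAddCommGroup X] [NormedSpace ℝ X] : Prop :=
  ∃ lam : ℝ, 1 ≤ lam ∧ IsLpLambdaSpace p lam X

/-- `X` has an unconditional basis indexed by some (countable or uncountable) set:
every element has a unique representation as an unconditionally convergent sum
(`HasSum` is summability over the net of finite subsets, i.e. unconditional convergence). -/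
def HasUnconditionalBasis (X : Type u) [NormedAddCommGroup X] [NormedSpace ℝ X] : Prop :=
  ∃ (Γ : Type u) (e : Γ → X), ∀ x : X, ∃! a : Γ → ℝ, HasSum (fun γ => a γ • e γ) x

section MoreDefs

variable {X Y : Type*} [NormedAddCommGroup X] [NormedSpace ℝ X]
  [NormedAddCommGroup Y] [NormedSpace ℝ Y]

/-- A weakly Cauchy sequence: `(f (x n))` converges for every functional `f`. -/
def WeakCauchy (x : ℕ → X) : Prop :=
  ∀ f : X →L[ℝ] ℝ, ∃ r : ℝ, Tendsto (fun n => f (x n)) atTop (𝓝 r)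

/-- A weakly unconditionally Cauchy series: `∑ |f (y i)| < ∞` for every functional `f`. -/
def WUCSeries (y : ℕ → X) : Prop :=
  ∀ f : X →L[ℝ] ℝ, Summable (fun i => |f (y i)|)

/-- Property (u): for every weakly Cauchy sequence `(x n)` there is a weakly
unconditionally Cauchy series `∑ y i` such that `(x n - ∑_{i ≤ n} y i)` is weakly null. -/
def PropertyU (X : Type*) [NormedAddCommGroup X] [NormedSpace ℝ X] : Prop :=
  ∀ x : ℕ → X, WeakCauchy x →
    ∃ y : ℕ → X, WUCSeries y ∧
      WeakTendsto (fun n => x n - ∑ i ∈ Finset.range (n + 1), y i) 0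

/-- A sequence is equivalent to the unit vector basis of `c₀`. -/
def EquivC0Basis (x : ℕ → X) : Prop :=
  ∃ c > (0:ℝ), ∃ C > (0:ℝ), ∀ (s : Finset ℕ) (a : ℕ → ℝ),
    c * (s.sup fun i => ‖a i‖₊ : NNReal) ≤ ‖∑ i ∈ s, a i • x i‖ ∧
    ‖∑ i ∈ s, a i • x i‖ ≤ C * (s.sup fun i => ‖a i‖₊ : NNReal)

/-- Property (S): every weakly null, non norm null sequence has a subsequence equivalent
to the unit vector basis of `c₀`. -/
def PropertyS (X : Type*) [NormedAddCommGroup X] [NormedSpace ℝ X] : Prop :=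
  ∀ x : ℕ → X, WeakTendsto x 0 → ¬Tendsto x atTop (𝓝 0) →
    ∃ φ : ℕ → ℕ, StrictMono φ ∧ EquivC0Basis (fun n => x (φ n))

/-- A topological space is scattered if every nonempty subset has a point isolated in it. -/
def Scattered (K : Type*) [TopologicalSpace K] : Prop :=
  ∀ s : Set K, s.Nonempty → ∃ x ∈ s, ∃ U : Set K, IsOpen U ∧ U ∩ s = {x}

/-- The projective tensor norm on the algebraic tensor product: the infimum of
`∑ ‖xᵢ‖ ‖yᵢ‖` over all representations `u = ∑ xᵢ ⊗ yᵢ`. -/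
def projNorm (u : TensorProduct ℝ X Y) : ℝ :=
  sInf ((fun l : List (X × Y) => (l.map fun p => ‖p.1‖ * ‖p.2‖).sum) ''
    {l : List (X × Y) | (l.map fun p => p.1 ⊗ₜ[ℝ] p.2).sum = u})

end MoreDefs

def c0Sum (Xf : ℕ → Type u) [∀ n, NormedAddCommGroup (Xf n)] [∀ n, NormedSpace ℝ (Xf n)] :
    Submodule ℝ (lp Xf ⊤) where
  carrier := {f | Tendsto (fun n => ‖f n‖) atTop (𝓝 0)}
  zero_mem' := by
    simp
  add_mem' := by
    intro f g hf hg
    refine squeeze_zero (fun n => norm_nonneg _) (fun n => ?_)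
      (by simpa using Tendsto.add hf hg)
    simpa using norm_add_le (f n) (g n)
  smul_mem' := by
    intro c f hf
    refine squeeze_zero (fun n => norm_nonneg _) (fun n => ?_)
      (by simpa using hf.const_mul ‖c‖)
    simp [norm_smul]


section Aux
set_option linter.unusedVariables false

variable {Y : Type u} [NormedAddCommGroup Y] [NormedSpace ℝ Y]

/-- Mazur-type selection step. -/
lemma mazur_step (yy : ℕ → Y) {ε : ℝ} (hε : 0 < ε)
    (hnorm : ∀ j, ε ≤ ‖yy j‖)
    (hweak : ∀ g : Y →L[ℝ] ℝ, Tendsto (fun j => g (yy j)) atTop (𝓝 0))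
    (F : Submodule ℝ Y) (hF : FiniteDimensional ℝ F)
    {δ : ℝ} (hδ1 : 0 < δ) (hδ2 : δ ≤ 1/2) (m : ℕ) :
    ∃ k, m ≤ k ∧ ∀ x ∈ F, ∀ t : ℝ, (1 - δ) * ‖x‖ ≤ ‖x + t • yy k‖ := by
  haveI := hF
  have hsph : IsCompact (sphere (0 : F) 1) := isCompact_sphere _ _
  obtain ⟨t0, ht0sub, ht0fin, ht0cov⟩ :=
    hsph.finite_cover_balls (e := δ/4) (by linarith)
  -- choose norming functionals for each point of the net
  have hg : ∀ x : F, x ∈ t0 → ∃ g : Y →L[ℝ] ℝ, ‖g‖ = 1 ∧ g (x : Y) = ‖(x : Y)‖ := by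
    intro x hx
    have hx1 : ‖x‖ = 1 := by simpa using ht0sub hx
    have : (x : Y) ≠ 0 := by
      intro h0
      have : ‖x‖ = 0 := by rw [show ‖x‖ = ‖(x:Y)‖ from rfl, h0, norm_zero]
      rw [hx1] at this; norm_num at this
    exact exists_dual_vector ℝ (x : Y) (norm_ne_zero_iff.mpr this)
  classical
  choose! g hg1 hg2 using hg
  -- eventually all functionals are small on yy k
  have hev : ∀ᶠ k in atTop, ∀ x ∈ t0, |g x (yy k)| ≤ δ * ε / 8 := by
    rw [eventually_all_finite ht0fin]
    intro x hx
    have := hweak (g x)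
    have h8 : 0 < δ * ε / 8 := by positivity
    filter_upwards [Metric.tendsto_nhds.mp this _ h8] with k hk
    simpa [Real.dist_eq] using hk.le
  obtain ⟨k, hksm, hkm⟩ := (hev.and (eventually_ge_atTop m)).exists
  refine ⟨k, hkm, ?_⟩
  -- unit vector case
  have key : ∀ x : Y, x ∈ F → ‖x‖ = 1 → ∀ t : ℝ, 1 - δ ≤ ‖x + t • yy k‖ := by
    intro xy hxyF hxy t
    set x : F := ⟨xy, hxyF⟩ with hxdef
    have hx : ‖x‖ = 1 := hxy
    have hxcoe : (x : Y) = xy := rfl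
    rw [← hxcoe]
    by_cases ht : |t| ≤ 2/ε
    · obtain ⟨x₀, hx₀t, hxx₀⟩ : ∃ x₀ ∈ t0, x ∈ ball x₀ (δ/4) := by
        have := ht0cov (show x ∈ sphere (0:F) 1 by simpa using hx)
        simpa using this
      have hdist : ‖(x : Y) - (x₀ : Y)‖ < δ/4 := by
        have : dist x x₀ < δ/4 := mem_ball.mp hxx₀
        simpa [dist_eq_norm] using this
      have hnx₀ : ‖(x₀ : Y)‖ = 1 := by simpa using ht0sub hx₀t
      have hgx₀ := hg2 x₀ hx₀t
      have hgy := hksm x₀ hx₀t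
      have h1 : g x₀ ((x : Y) + t • yy k)
          = g x₀ (x₀ : Y) + g x₀ ((x:Y) - (x₀:Y)) + t * g x₀ (yy k) := by
        rw [map_add, map_sub, map_smul]; ring_nf
      have h2 : |g x₀ ((x:Y) - (x₀:Y))| ≤ δ/4 := by
        calc |g x₀ ((x:Y) - (x₀:Y))| ≤ ‖g x₀‖ * ‖(x:Y) - (x₀:Y)‖ := (g x₀).le_opNorm _
        _ ≤ 1 * (δ/4) := by
            apply mul_le_mul (le_of_eq (hg1 x₀ hx₀t)) hdist.le (norm_nonneg _) zero_le_one
        _ = δ/4 := one_mul _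
      have h3 : |t * g x₀ (yy k)| ≤ (2/ε) * (δ * ε / 8) := by
        rw [abs_mul]
        apply mul_le_mul ht hgy (abs_nonneg _) (by positivity)
      have h4 : (2/ε) * (δ * ε / 8) = δ/4 := by field_simp; ring
      have h5 : 1 - δ ≤ g x₀ ((x : Y) + t • yy k) := by
        rw [h1, hgx₀, hnx₀]
        have := abs_le.mp h2
        have := abs_le.mp (h4 ▸ h3)
        linarith
      calc 1 - δ ≤ g x₀ ((x:Y) + t • yy k) := h5
      _ ≤ |g x₀ ((x:Y) + t • yy k)| := le_abs_self _
      _ ≤ ‖g x₀‖ * ‖(x:Y) + t • yy k‖ := (g x₀).le_opNorm _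
      _ = ‖(x:Y) + t • yy k‖ := by rw [hg1 x₀ hx₀t, one_mul]
    · push_neg at ht
      have h6 : 2 ≤ |t| * ‖yy k‖ := by
        calc (2:ℝ) = (2/ε) * ε := by field_simp
        _ ≤ |t| * ‖yy k‖ := by
            apply mul_le_mul ht.le (hnorm k) hε.le (abs_nonneg _)
      calc 1 - δ ≤ 1 := by linarith
      _ ≤ |t| * ‖yy k‖ - ‖(x:Y)‖ := by
          have : ‖(x:Y)‖ = 1 := hx
          rw [this]; linarith
      _ = ‖t • yy k‖ - ‖(x:Y)‖ := by rw [norm_smul, Real.norm_eq_abs]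
      _ ≤ ‖(x:Y) + t • yy k‖ := by
          have h7 : ‖((x:Y) + t • yy k) - (x:Y)‖ ≤ ‖(x:Y) + t • yy k‖ + ‖(x:Y)‖ :=
            norm_sub_le _ _
          rw [add_sub_cancel_left] at h7
          linarith
  -- general case by homogeneity
  intro x hxF t
  rcases eq_or_ne x 0 with rfl | hx0
  · simpa using norm_nonneg ((0:Y) + t • yy k)
  · have hrpos : 0 < ‖x‖ := norm_pos_iff.mpr hx0
    set r : ℝ := ‖x‖ with hr
    have hmem : r⁻¹ • x ∈ F := F.smul_mem _ hxF
    have hn1 : ‖r⁻¹ • x‖ = 1 := by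
      rw [norm_smul, norm_inv, Real.norm_eq_abs, abs_of_pos hrpos, ← hr]
      field_simp
    have hkey := key (r⁻¹ • x) hmem hn1 (r⁻¹ * t)
    have heq : r⁻¹ • x + (r⁻¹ * t) • yy k = r⁻¹ • (x + t • yy k) := by
      rw [smul_add, smul_smul]
    rw [heq, norm_smul, norm_inv, Real.norm_eq_abs, abs_of_pos hrpos] at hkey
    have := mul_le_mul_of_nonneg_left hkey hrpos.le
    rw [mul_comm]
    calc ‖x‖ * (1 - δ) = r * (1 - δ) := by rw [hr]
    _ ≤ r * (r⁻¹ * ‖x + t • yy k‖) := this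
    _ = ‖x + t • yy k‖ := by field_simp

private lemma list_le_foldr_max (l : List ℕ) : ∀ x ∈ l, x ≤ l.foldr max 0 := by
  induction l with
  | nil => simp
  | cons a l ih =>
    intro x hx
    rcases List.mem_cons.mp hx with rfl | hx
    · exact le_max_left _ _
    · exact le_trans (ih x hx) (le_max_right _ _)

private lemma prod_one_sub_ge (s : Finset ℕ) (δ : ℕ → ℝ) (h0 : ∀ i ∈ s, 0 ≤ δ i)
    (h1 : ∀ i ∈ s, δ i ≤ 1) : 1 - ∑ i ∈ s, δ i ≤ ∏ i ∈ s, (1 - δ i) := by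
  classical
  induction s using Finset.induction_on with
  | empty => simp
  | insert a s hnotmem ih =>
    rw [Finset.sum_insert hnotmem, Finset.prod_insert hnotmem]
    have hprod := ih (fun i hi => h0 i (Finset.mem_insert_of_mem hi))
      (fun i hi => h1 i (Finset.mem_insert_of_mem hi))
    have ha0 := h0 a (Finset.mem_insert_self a s)
    have ha1 := h1 a (Finset.mem_insert_self a s)
    have hsum0 : 0 ≤ ∑ i ∈ s, δ i := Finset.sum_nonneg (fun i hi => h0 i (Finset.mem_insert_of_mem hi))
    nlinarith [hprod, ha0, ha1]

private lemma geom_tail_sum_le (m n : ℕ) :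
    ∑ i ∈ Finset.Ico m n, ((2:ℝ)⁻¹) ^ (i + 3) ≤ 1/4 := by
  have h1 : ∑ i ∈ Finset.Ico m n, ((2:ℝ)⁻¹) ^ (i + 3)
      ≤ ∑ i ∈ Finset.range n, ((2:ℝ)⁻¹) ^ (i + 3) := by
    apply Finset.sum_le_sum_of_subset_of_nonneg
    · intro i hi
      exact Finset.mem_range.mpr ((Finset.mem_Ico.mp hi).2)
    · intro i _ _; positivity
  have h2 : ∑ i ∈ Finset.range n, ((2:ℝ)⁻¹) ^ (i + 3)
      = (2:ℝ)⁻¹^3 * ∑ i ∈ Finset.range n, ((2:ℝ)⁻¹) ^ i := by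
    rw [Finset.mul_sum]
    congr 1; ext i; rw [← pow_add]; ring_nf
  have h3 : ∑ i ∈ Finset.range n, ((2:ℝ)⁻¹) ^ i ≤ 2 := by
    have := sum_geometric_two_le n
    simpa [one_div] using this
  calc ∑ i ∈ Finset.Ico m n, ((2:ℝ)⁻¹) ^ (i + 3) ≤ (2:ℝ)⁻¹^3 * ∑ i ∈ Finset.range n, ((2:ℝ)⁻¹) ^ i := by
        rw [← h2]; exact h1
  _ ≤ (2:ℝ)⁻¹^3 * 2 := by
      apply mul_le_mul_of_nonneg_left h3 (by positivity)
  _ = 1/4 := by norm_num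

private lemma prod_inv_le_two (m n : ℕ) :
    ∏ i ∈ Finset.Ico m n, ((1:ℝ) - (2:ℝ)⁻¹ ^ (i + 3))⁻¹ ≤ 2 := by
  have hfac : ∀ i : ℕ, (0:ℝ) < 1 - (2:ℝ)⁻¹ ^ (i + 3) := by
    intro i
    have : ((2:ℝ)⁻¹) ^ (i+3) ≤ (2:ℝ)⁻¹ ^ 3 := by
      apply pow_le_pow_of_le_one (by norm_num) (by norm_num); omega
    norm_num at this ⊢; linarith
  have hp : (1:ℝ)/2 ≤ ∏ i ∈ Finset.Ico m n, ((1:ℝ) - (2:ℝ)⁻¹ ^ (i + 3)) := by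
    have := prod_one_sub_ge (Finset.Ico m n) (fun i => (2:ℝ)⁻¹ ^ (i+3))
      (fun i _ => by positivity) (fun i _ => by nlinarith [hfac i])
    have h4 := geom_tail_sum_le m n
    linarith
  have hppos : (0:ℝ) < ∏ i ∈ Finset.Ico m n, ((1:ℝ) - (2:ℝ)⁻¹ ^ (i + 3)) :=
    lt_of_lt_of_le (by norm_num) hp
  rw [Finset.prod_inv_distrib]
  calc (∏ i ∈ Finset.Ico m n, ((1:ℝ) - (2:ℝ)⁻¹ ^ (i + 3)))⁻¹ ≤ ((1:ℝ)/2)⁻¹ :=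
        inv_anti₀ (by norm_num) hp
  _ = 2 := by norm_num

/-- Mazur selection: a weakly null sequence bounded below in norm admits a subsequence
satisfying a `c₀` lower estimate. -/
lemma mazur_selection (yy : ℕ → Y) {ε : ℝ} (hε : 0 < ε)
    (hnorm : ∀ j, ε ≤ ‖yy j‖)
    (hweak : ∀ g : Y →L[ℝ] ℝ, Tendsto (fun j => g (yy j)) atTop (𝓝 0)) :
    ∃ φ : ℕ → ℕ, StrictMono φ ∧ ∀ (a : ℕ → ℝ) (N j : ℕ), j < N →
      ε/4 * |a j| ≤ ‖∑ i ∈ Finset.range N, a i • yy (φ i)‖ := by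
  classical
  -- the inductive pick
  have step : ∀ (l : List ℕ) (n : ℕ), ∃ k, (l.foldr max 0) + 1 ≤ k ∧
      ∀ x ∈ Submodule.span ℝ {z | z ∈ l.map yy}, ∀ t : ℝ,
        (1 - (2:ℝ)⁻¹ ^ (n + 3)) * ‖x‖ ≤ ‖x + t • yy k‖ := by
    intro l n
    have hfin : ({z | z ∈ l.map yy} : Set Y).Finite := (l.map yy).finite_toSet
    have hFD : FiniteDimensional ℝ (Submodule.span ℝ {z | z ∈ l.map yy}) :=
      FiniteDimensional.span_of_finite ℝ hfin
    exact mazur_step yy hε hnorm hweak _ hFD (by positivity)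
      (by
        have : ((2:ℝ)⁻¹) ^ (n+3) ≤ (2:ℝ)⁻¹ ^ 1 := by
          apply pow_le_pow_of_le_one (by norm_num) (by norm_num); omega
        norm_num at this ⊢; linarith) _
  let pick : List ℕ → ℕ → ℕ := fun l n => Classical.choose (step l n)
  let hist : ℕ → List ℕ := fun n => Nat.rec [] (fun n l => l ++ [pick l n]) n
  let φ : ℕ → ℕ := fun n => pick (hist n) n
  have hist_succ : ∀ n, hist (n+1) = hist n ++ [φ n] := fun n => rfl
  have hist_eq : ∀ n, hist n = (List.range n).map φ := by
    intro n
    induction n with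
    | zero => rfl
    | succ n ih => rw [hist_succ, ih, List.range_succ, List.map_append]; rfl
  have hspec : ∀ n, ((hist n).foldr max 0) + 1 ≤ φ n ∧
      ∀ x ∈ Submodule.span ℝ {z | z ∈ (hist n).map yy}, ∀ t : ℝ,
        (1 - (2:ℝ)⁻¹ ^ (n + 3)) * ‖x‖ ≤ ‖x + t • yy (φ n)‖ :=
    fun n => Classical.choose_spec (step (hist n) n)
  have hmono : StrictMono φ := by
    intro i n hin
    have hmem : φ i ∈ hist n := by
      rw [hist_eq]
      exact List.mem_map.mpr ⟨i, List.mem_range.mpr hin, rfl⟩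
    calc φ i ≤ (hist n).foldr max 0 := list_le_foldr_max _ _ hmem
    _ < φ n := (hspec n).1
  refine ⟨φ, hmono, ?_⟩
  intro a N j hjN
  set S : ℕ → Y := fun n => ∑ i ∈ Finset.range n, a i • yy (φ i) with hS
  -- chain inequality
  have chain : ∀ m n, m ≤ n →
      ‖S m‖ ≤ (∏ i ∈ Finset.Ico m n, ((1:ℝ) - (2:ℝ)⁻¹ ^ (i + 3))⁻¹) * ‖S n‖ := by
    intro m n hmn
    induction n, hmn using Nat.le_induction with
    | base => simp
    | succ n hmn ih =>
      have hfac : (0:ℝ) < 1 - (2:ℝ)⁻¹ ^ (n + 3) := by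
        have : ((2:ℝ)⁻¹) ^ (n+3) ≤ (2:ℝ)⁻¹ ^ 1 := by
          apply pow_le_pow_of_le_one (by norm_num) (by norm_num); omega
        norm_num at this ⊢; linarith
      have hSmem : S n ∈ Submodule.span ℝ {z | z ∈ (hist n).map yy} := by
        apply Submodule.sum_mem
        intro i hi
        apply Submodule.smul_mem
        apply Submodule.subset_span
        rw [hist_eq]
        simp only [Set.mem_setOf_eq, List.map_map, List.mem_map]
        exact ⟨i, List.mem_range.mpr (Finset.mem_range.mp hi), rfl⟩
      have hstep := (hspec n).2 (S n) hSmem (a n)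
      have hSn : S (n+1) = S n + a n • yy (φ n) := Finset.sum_range_succ _ _
      rw [← hSn] at hstep
      have h1 : ‖S n‖ ≤ (1 - (2:ℝ)⁻¹ ^ (n + 3))⁻¹ * ‖S (n+1)‖ := by
        calc ‖S n‖ ≤ ‖S (n+1)‖ / (1 - (2:ℝ)⁻¹ ^ (n + 3)) := (le_div_iff₀' hfac).mpr hstep
        _ = (1 - (2:ℝ)⁻¹ ^ (n + 3))⁻¹ * ‖S (n+1)‖ := by rw [div_eq_inv_mul]
      have hprodnn : (0:ℝ) ≤ ∏ i ∈ Finset.Ico m n, ((1:ℝ) - (2:ℝ)⁻¹ ^ (i + 3))⁻¹ := by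
        apply Finset.prod_nonneg
        intro i _
        have : ((2:ℝ)⁻¹) ^ (i+3) ≤ (2:ℝ)⁻¹ ^ 1 := by
          apply pow_le_pow_of_le_one (by norm_num) (by norm_num); omega
        norm_num at this ⊢; linarith
      calc ‖S m‖ ≤ (∏ i ∈ Finset.Ico m n, ((1:ℝ) - (2:ℝ)⁻¹ ^ (i + 3))⁻¹) * ‖S n‖ := ih
      _ ≤ (∏ i ∈ Finset.Ico m n, ((1:ℝ) - (2:ℝ)⁻¹ ^ (i + 3))⁻¹) *
            ((1 - (2:ℝ)⁻¹ ^ (n + 3))⁻¹ * ‖S (n+1)‖) :=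
          mul_le_mul_of_nonneg_left h1 hprodnn
      _ = (∏ i ∈ Finset.Ico m (n+1), ((1:ℝ) - (2:ℝ)⁻¹ ^ (i + 3))⁻¹) * ‖S (n+1)‖ := by
          rw [Finset.prod_Ico_succ_top hmn]; ring
  have chain2 : ∀ m, m ≤ N → ‖S m‖ ≤ 2 * ‖S N‖ := by
    intro m hm
    calc ‖S m‖ ≤ (∏ i ∈ Finset.Ico m N, ((1:ℝ) - (2:ℝ)⁻¹ ^ (i + 3))⁻¹) * ‖S N‖ := chain m N hm
    _ ≤ 2 * ‖S N‖ := mul_le_mul_of_nonneg_right (prod_inv_le_two m N) (norm_nonneg _)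
  have hdiff : |a j| * ‖yy (φ j)‖ ≤ 4 * ‖S N‖ := by
    have h1 : a j • yy (φ j) = S (j+1) - S j := by rw [hS]; simp [Finset.sum_range_succ]
    have h2 : ‖a j • yy (φ j)‖ ≤ ‖S (j+1)‖ + ‖S j‖ := by rw [h1]; exact norm_sub_le _ _
    rw [norm_smul, Real.norm_eq_abs] at h2
    have h3 := chain2 (j+1) hjN
    have h4 := chain2 j (le_of_lt hjN)
    linarith
  have h5 : |a j| * ε ≤ |a j| * ‖yy (φ j)‖ :=
    mul_le_mul_of_nonneg_left (hnorm (φ j)) (abs_nonneg _)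
  rw [div_mul_eq_mul_div, div_le_iff₀ (by norm_num : (0:ℝ) < 4)]
  calc ε * |a j| = |a j| * ε := mul_comm _ _
  _ ≤ 4 * ‖S N‖ := le_trans h5 hdiff
  _ = ‖S N‖ * 4 := mul_comm _ _

variable {Z W : Type*} [NormedAddCommGroup Z] [NormedSpace ℝ Z]
  [NormedAddCommGroup W] [NormedSpace ℝ W]

/-- The image of a closed submodule under a linear isometry from a complete space is closed. -/
lemma LinearIsometry.isClosed_map [CompleteSpace Z] (f : Z →ₗᵢ[ℝ] W)
    (M : Submodule ℝ Z) (hM : IsClosed (M : Set Z)) :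
    IsClosed ((M.map f.toLinearMap : Submodule ℝ W) : Set W) := by
  have h1 : ((M.map f.toLinearMap : Submodule ℝ W) : Set W) = ⇑f '' (M : Set Z) := by
    ext w
    simp only [Submodule.map_coe]
    rfl
  rw [h1]
  have hc : IsComplete (M : Set Z) := hM.isComplete
  have hc2 : IsComplete (⇑f '' (M : Set Z)) :=
    (LinearIsometry.isComplete_image_iff f).mpr hc
  exact hc2.isClosed

/-- A linear isometry restricts to a continuous linear equivalence between a submodule
and its image. -/
def LinearIsometry.mapEquiv (f : Z →ₗᵢ[ℝ] W) (M : Submodule ℝ Z) :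
    M ≃L[ℝ] (M.map f.toLinearMap) := by
  have hinj : Function.Injective f.toLinearMap := f.injective
  refine { Submodule.equivMapOfInjective f.toLinearMap hinj M with
    continuous_toFun := ?_, continuous_invFun := ?_ }
  · apply Continuous.subtype_mk
    exact f.continuous.comp continuous_subtype_val
  · have hiso : Isometry (Submodule.equivMapOfInjective f.toLinearMap hinj M).symm := by
      intro a b
      have h1 : ∀ c : (M.map f.toLinearMap),
          f ((Submodule.equivMapOfInjective f.toLinearMap hinj M).symm c) = (c : W) := by
        intro c
        have := Submodule.coe_equivMapOfInjective_apply f.toLinearMap hinj M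
          ((Submodule.equivMapOfInjective f.toLinearMap hinj M).symm c)
        rw [LinearEquiv.apply_symm_apply] at this
        exact this.symm
      rw [Subtype.edist_eq, Subtype.edist_eq]
      rw [← h1 a, ← h1 b]
      exact (f.isometry.edist_eq _ _).symm
    exact hiso.continuous

namespace CZero
variable {Xf : ℕ → Type u} [∀ n, NormedAddCommGroup (Xf n)] [∀ n, NormedSpace ℝ (Xf n)]


lemma mem_iff {f : lp Xf ⊤} : f ∈ c0Sum Xf ↔ Tendsto (fun n => ‖f n‖) atTop (𝓝 0) :=
  Iff.rfl

lemma coord_tendsto (x : ↥(c0Sum Xf)) : Tendsto (fun n => ‖(x : lp Xf ⊤) n‖) atTop (𝓝 0) := x.2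

/-- Build an element of the `c₀`-sum from coordinates. -/
def mk' (f : ∀ n, Xf n) (h0 : Tendsto (fun n => ‖f n‖) atTop (𝓝 0)) : ↥(c0Sum Xf) :=
  ⟨⟨f, memℓp_infty h0.bddAbove_range⟩, h0⟩

@[simp] lemma mk'_apply (f : ∀ n, Xf n) (h0) (n : ℕ) : ((mk' f h0 : ↥(c0Sum Xf)) : lp Xf ⊤) n = f n := rfl

lemma norm_def (x : ↥(c0Sum Xf)) : ‖x‖ = ‖(x : lp Xf ⊤)‖ := rfl

lemma norm_le (x : ↥(c0Sum Xf)) {C : ℝ} (h0 : 0 ≤ C) (h : ∀ n, ‖(x : lp Xf ⊤) n‖ ≤ C) : ‖x‖ ≤ C :=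
  lp.norm_le_of_forall_le h0 h

lemma coord_le_norm (x : ↥(c0Sum Xf)) (n : ℕ) : ‖(x : lp Xf ⊤) n‖ ≤ ‖x‖ :=
  lp.norm_apply_le_norm (by simp) (x : lp Xf ⊤) n

lemma coord_add (x y : ↥(c0Sum Xf)) (n : ℕ) :
    ((x + y : ↥(c0Sum Xf)) : lp Xf ⊤) n = (x : lp Xf ⊤) n + (y : lp Xf ⊤) n := rfl

lemma coord_smul (c : ℝ) (x : ↥(c0Sum Xf)) (n : ℕ) :
    ((c • x : ↥(c0Sum Xf)) : lp Xf ⊤) n = c • ((x : lp Xf ⊤) n) := rfl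

lemma coord_neg (y : ↥(c0Sum Xf)) (n : ℕ) :
    ((-y : ↥(c0Sum Xf)) : lp Xf ⊤) n = -((y : lp Xf ⊤) n) := rfl

lemma coord_sub (x y : ↥(c0Sum Xf)) (n : ℕ) :
    ((x - y : ↥(c0Sum Xf)) : lp Xf ⊤) n = (x : lp Xf ⊤) n - (y : lp Xf ⊤) n := by
  rw [sub_eq_add_neg, coord_add, coord_neg, sub_eq_add_neg]

/-- Evaluation at a coordinate as an additive monoid hom. -/
def evalAM (n : ℕ) : ↥(c0Sum Xf) →+ Xf n where
  toFun x := (x : lp Xf ⊤) n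
  map_zero' := rfl
  map_add' x y := rfl

lemma coord_sum {ι : Type*} (s : Finset ι) (v : ι → ↥(c0Sum Xf)) (n : ℕ) :
    ((∑ j ∈ s, v j : ↥(c0Sum Xf)) : lp Xf ⊤) n = ∑ j ∈ s, ((v j : lp Xf ⊤) n) :=
  map_sum (evalAM n) v s

lemma eq_iff {x y : ↥(c0Sum Xf)} (h : ∀ n, (x : lp Xf ⊤) n = (y : lp Xf ⊤) n) : x = y :=
  Subtype.ext (lp.ext (funext h))

/-- Truncation to coordinates `< N`. -/
def truncFun (N : ℕ) (x : ↥(c0Sum Xf)) : ↥(c0Sum Xf) :=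
  mk' (fun n => if n < N then (x : lp Xf ⊤) n else 0)
    (by
      have hev : (fun n => ‖if n < N then (x : lp Xf ⊤) n else 0‖) =ᶠ[atTop] (fun _ => (0:ℝ)) := by
        filter_upwards [eventually_ge_atTop N] with n hn
        rw [if_neg (by omega), norm_zero]
      rw [tendsto_congr' hev]
      exact tendsto_const_nhds)

lemma truncFun_coord (N : ℕ) (x : ↥(c0Sum Xf)) (n : ℕ) :
    ((truncFun N x : ↥(c0Sum Xf)) : lp Xf ⊤) n = if n < N then (x : lp Xf ⊤) n else 0 := rfl

lemma truncFun_norm_le (N : ℕ) (x : ↥(c0Sum Xf)) : ‖truncFun N x‖ ≤ ‖x‖ := by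
  apply norm_le _ (norm_nonneg x)
  intro n
  rw [truncFun_coord]
  split
  · exact coord_le_norm x n
  · simp

/-- Truncation as a continuous linear map. -/
def trunc (N : ℕ) : ↥(c0Sum Xf) →L[ℝ] ↥(c0Sum Xf) :=
  LinearMap.mkContinuous
    { toFun := truncFun N
      map_add' := by
        intro x y
        apply eq_iff
        intro n
        simp only [truncFun_coord, coord_add]
        split <;> simp
      map_smul' := by
        intro c x
        apply eq_iff
        intro n
        simp only [truncFun_coord, coord_smul, RingHom.id_apply]
        split <;> simp }
    1 (fun x => by simpa using truncFun_norm_le N x)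

lemma trunc_coord (N : ℕ) (x : ↥(c0Sum Xf)) (n : ℕ) :
    ((trunc N x : ↥(c0Sum Xf)) : lp Xf ⊤) n = if n < N then (x : lp Xf ⊤) n else 0 := rfl

lemma sub_trunc_coord (N : ℕ) (x : ↥(c0Sum Xf)) (n : ℕ) :
    ((x - trunc N x : ↥(c0Sum Xf)) : lp Xf ⊤) n = if n < N then 0 else (x : lp Xf ⊤) n := by
  rw [coord_sub, trunc_coord]
  split <;> simp

/-- The inclusion of the `k`-th coordinate space. -/
def inclFun (k : ℕ) (a : Xf k) : ↥(c0Sum Xf) :=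
  ⟨lp.single ⊤ k a, by
    rw [mem_iff]
    have hev : (fun n => ‖(lp.single ⊤ k a : lp Xf ⊤) n‖) =ᶠ[atTop] (fun _ => (0:ℝ)) := by
      filter_upwards [eventually_ge_atTop (k+1)] with n hn
      rw [lp.single_apply_ne _ _ _ (by omega), norm_zero]
    rw [tendsto_congr' hev]
    exact tendsto_const_nhds⟩

lemma inclFun_coord_self (k : ℕ) (a : Xf k) : ((inclFun k a : ↥(c0Sum Xf)) : lp Xf ⊤) k = a :=
  lp.single_apply_self _ _ _

lemma inclFun_coord_ne (k : ℕ) (a : Xf k) {n : ℕ} (h : n ≠ k) :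
    ((inclFun k a : ↥(c0Sum Xf)) : lp Xf ⊤) n = 0 :=
  lp.single_apply_ne _ _ _ h

lemma inclFun_norm (k : ℕ) (a : Xf k) : ‖inclFun k a‖ = ‖a‖ := by
  apply le_antisymm
  · refine norm_le _ (norm_nonneg a) fun n => ?_
    rcases eq_or_ne n k with rfl | h
    · rw [inclFun_coord_self]
    · rw [inclFun_coord_ne _ _ h]; simp
  · have := coord_le_norm (inclFun k a) k
    rwa [inclFun_coord_self] at this

/-- The inclusion as a linear isometry. -/
def inclLI (k : ℕ) : Xf k →ₗᵢ[ℝ] ↥(c0Sum Xf) where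
  toLinearMap :=
    { toFun := inclFun k
      map_add' := by
        intro a b
        apply eq_iff
        intro n
        rcases eq_or_ne n k with rfl | h
        · rw [coord_add, inclFun_coord_self, inclFun_coord_self, inclFun_coord_self]
        · rw [coord_add, inclFun_coord_ne _ _ h, inclFun_coord_ne _ _ h,
            inclFun_coord_ne _ _ h, add_zero]
      map_smul' := by
        intro c a
        apply eq_iff
        intro n
        rcases eq_or_ne n k with rfl | h
        · rw [RingHom.id_apply, coord_smul, inclFun_coord_self, inclFun_coord_self]
        · rw [RingHom.id_apply, coord_smul, inclFun_coord_ne _ _ h, inclFun_coord_ne _ _ h,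
            smul_zero] }
  norm_map' := inclFun_norm k

/-- The inclusion as a continuous linear map. -/
def incl (k : ℕ) : Xf k →L[ℝ] ↥(c0Sum Xf) := (inclLI (Xf := Xf) k).toContinuousLinearMap

lemma incl_eq (k : ℕ) (a : Xf k) : incl k a = inclFun k a := rfl

/-- The coordinate projection. -/
def proj (k : ℕ) : ↥(c0Sum Xf) →L[ℝ] Xf k :=
  LinearMap.mkContinuous
    { toFun := fun x => (x : lp Xf ⊤) k
      map_add' := fun x y => rfl
      map_smul' := fun c x => rfl }
    1 (fun x => by rw [one_mul]; exact coord_le_norm x k)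

lemma proj_eq (k : ℕ) (x : ↥(c0Sum Xf)) : proj k x = (x : lp Xf ⊤) k := rfl

lemma trunc_eq_sum (N : ℕ) (x : ↥(c0Sum Xf)) :
    trunc N x = ∑ k ∈ Finset.range N, incl k (proj k x) := by
  apply eq_iff
  intro n
  rw [trunc_coord, coord_sum]
  by_cases hn : n < N
  · rw [if_pos hn]
    rw [Finset.sum_eq_single n]
    · rw [incl_eq, inclFun_coord_self, proj_eq]
    · intro k _ hk
      rw [incl_eq, inclFun_coord_ne _ _ (Ne.symm hk)]
    · intro h
      exact absurd (Finset.mem_range.mpr hn) h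
  · rw [if_neg hn]
    symm
    apply Finset.sum_eq_zero
    intro k hk
    have : n ≠ k := by
      have := Finset.mem_range.mp hk; omega
    rw [incl_eq, inclFun_coord_ne _ _ this]

end CZero

namespace CZero
variable {Xf : ℕ → Type u} [∀ n, NormedAddCommGroup (Xf n)] [∀ n, NormedSpace ℝ (Xf n)]

section SeqC0Lemmas

lemma seqC0_apply_le_norm (a : SeqC0) (j : ℕ) : |a j| ≤ ‖a‖ := by
  calc |a j| = ‖a.toBCF j‖ := rfl
  _ ≤ ‖a.toBCF‖ := BoundedContinuousFunction.norm_coe_le_norm _ j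
  _ = ‖a‖ := ZeroAtInftyContinuousMap.norm_toBCF_eq_norm

lemma seqC0_norm_le (a : SeqC0) {C : ℝ} (h0 : 0 ≤ C) (h : ∀ j, |a j| ≤ C) : ‖a‖ ≤ C := by
  rw [← ZeroAtInftyContinuousMap.norm_toBCF_eq_norm]
  exact (BoundedContinuousFunction.norm_le h0).mpr h

lemma seqC0_tendsto (a : SeqC0) : Tendsto (fun j => a j) atTop (𝓝 0) := by
  have := a.zero_at_infty'
  rwa [cocompact_eq_atTop] at this

/-- Truncation of an element of `SeqC0`. -/
def truncC0 (a : SeqC0) (N : ℕ) : SeqC0 :=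
  ⟨⟨fun j => if j < N then a j else 0, continuous_of_discreteTopology⟩, by
    rw [cocompact_eq_atTop]
    have hev : (fun j => if j < N then a j else 0) =ᶠ[atTop] (fun _ => (0:ℝ)) := by
      filter_upwards [eventually_ge_atTop N] with j hj
      rw [if_neg (by omega)]
    rw [tendsto_congr' hev]
    exact tendsto_const_nhds⟩

lemma truncC0_apply (a : SeqC0) (N j : ℕ) : truncC0 a N j = if j < N then a j else 0 := rfl

lemma truncC0_close (a : SeqC0) {ε : ℝ} (hε : 0 < ε) : ∃ N, ‖a - truncC0 a N‖ ≤ ε := by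
  have h2 := Metric.tendsto_nhds.mp (seqC0_tendsto a) ε hε
  obtain ⟨N, hN⟩ := h2.exists_forall_of_atTop
  refine ⟨N, seqC0_norm_le _ hε.le fun j => ?_⟩
  have happ : (a - truncC0 a N) j = a j - (if j < N then a j else 0) := rfl
  rw [happ]
  by_cases hj : j < N
  · rw [if_pos hj, sub_self, abs_zero]; exact hε.le
  · rw [if_neg hj, sub_zero]
    have := hN j (by omega)
    rw [Real.dist_eq, sub_zero] at this
    exact this.le

end SeqC0Lemmas

section Blocks

variable (b : ℕ → ℕ)

/-- The block index of a coordinate. -/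
def blockIdx (n : ℕ) : ℕ := Nat.findGreatest (fun j => b j ≤ n) n

variable {b}

lemma blockIdx_le (hb0 : b 0 = 0) (n : ℕ) : b (blockIdx b n) ≤ n :=
  Nat.findGreatest_spec (P := fun j => b j ≤ n) (m := 0) (Nat.zero_le n)
    (by show b 0 ≤ n; rw [hb0]; exact Nat.zero_le n)

lemma le_blockIdx (hb : StrictMono b) {j n : ℕ} (h : b j ≤ n) : j ≤ blockIdx b n :=
  Nat.le_findGreatest (le_trans (hb.le_apply) h) h

lemma blockIdx_lt (hb : StrictMono b) (hb0 : b 0 = 0) (n : ℕ) : n < b (blockIdx b n + 1) := by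
  by_contra hcon
  push_neg at hcon
  have := le_blockIdx (b := b) hb hcon
  omega

lemma blockIdx_eq (hb : StrictMono b) (hb0 : b 0 = 0) {j n : ℕ} (h1 : b j ≤ n) (h2 : n < b (j+1)) : blockIdx b n = j := by
  have hle := le_blockIdx (b := b) hb h1
  by_contra hne
  have hlt : j + 1 ≤ blockIdx b n := by omega
  have := hb.monotone hlt
  have := blockIdx_le (b := b) hb0 n
  omega

variable (w : ℕ → ↥(c0Sum Xf))

lemma coord_vanish (hb : StrictMono b) (hb0 : b 0 = 0)
    (hsupp : ∀ j n, (n < b j ∨ b (j+1) ≤ n) → ((w j : ↥(c0Sum Xf)) : lp Xf ⊤) n = 0)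
    {j n : ℕ} (hne : j ≠ blockIdx b n) :
    ((w j : ↥(c0Sum Xf)) : lp Xf ⊤) n = 0 := by
  rcases lt_or_gt_of_ne hne with hlt | hgt
  · apply hsupp
    right
    calc b (j+1) ≤ b (blockIdx b n) := hb.monotone (by omega)
    _ ≤ n := blockIdx_le hb0 n
  · apply hsupp
    left
    by_contra hcon
    push_neg at hcon
    have := le_blockIdx (b := b) hb hcon
    omega

lemma blocks_coord_sum (hb : StrictMono b) (hb0 : b 0 = 0)
    (hsupp : ∀ j n, (n < b j ∨ b (j+1) ≤ n) → ((w j : ↥(c0Sum Xf)) : lp Xf ⊤) n = 0)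
    (s : Finset ℕ) (a : ℕ → ℝ) (n : ℕ) :
    ((∑ j ∈ s, a j • w j : ↥(c0Sum Xf)) : lp Xf ⊤) n =
      if blockIdx b n ∈ s then a (blockIdx b n) • ((w (blockIdx b n) : ↥(c0Sum Xf)) : lp Xf ⊤) n
      else 0 := by
  rw [coord_sum]
  have hterm : ∀ j, ((a j • w j : ↥(c0Sum Xf)) : lp Xf ⊤) n
      = a j • ((w j : ↥(c0Sum Xf)) : lp Xf ⊤) n := fun j => coord_smul _ _ _
  by_cases hmem : blockIdx b n ∈ s
  · rw [if_pos hmem]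
    rw [Finset.sum_eq_single (blockIdx b n)]
    · exact hterm _
    · intro k _ hk
      rw [hterm k, coord_vanish w hb hb0 hsupp hk, smul_zero]
    · intro h; exact absurd hmem h
  · rw [if_neg hmem]
    apply Finset.sum_eq_zero
    intro k hk
    have hkne : k ≠ blockIdx b n := fun h => hmem (h ▸ hk)
    rw [hterm k, coord_vanish w hb hb0 hsupp hkne, smul_zero]

lemma blocks_norm_sum_le (hb : StrictMono b) (hb0 : b 0 = 0)
    (hsupp : ∀ j n, (n < b j ∨ b (j+1) ≤ n) → ((w j : ↥(c0Sum Xf)) : lp Xf ⊤) n = 0)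
    (hwle : ∀ j, ‖w j‖ ≤ 1) (s : Finset ℕ) (a : ℕ → ℝ) {A : ℝ}
    (hA : 0 ≤ A) (ha : ∀ j ∈ s, |a j| ≤ A) : ‖∑ j ∈ s, a j • w j‖ ≤ A := by
  apply norm_le _ hA
  intro n
  rw [blocks_coord_sum w hb hb0 hsupp]
  split
  · rename_i hmem
    rw [norm_smul, Real.norm_eq_abs]
    calc |a (blockIdx b n)| * ‖((w (blockIdx b n) : ↥(c0Sum Xf)) : lp Xf ⊤) n‖
        ≤ A * 1 := by
          apply mul_le_mul (ha _ hmem) ?_ (norm_nonneg _) hA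
          exact le_trans (coord_le_norm _ n) (hwle _)
    _ = A := mul_one A
  · simpa using hA

end Blocks
end CZero

namespace CZero
variable {Xf : ℕ → Type u} [∀ n, NormedAddCommGroup (Xf n)] [∀ n, NormedSpace ℝ (Xf n)]

section Phi

variable {b : ℕ → ℕ} (w : ℕ → ↥(c0Sum Xf))

/-- The coordinates of the image of `a : SeqC0` under the block embedding. -/
def phiCoord (a : SeqC0) (n : ℕ) : Xf n :=
  a (blockIdx b n) • ((w (blockIdx b n) : ↥(c0Sum Xf)) : lp Xf ⊤) n

lemma phiCoord_norm_le (a : SeqC0) (hwle : ∀ j, ‖w j‖ ≤ 1) (n : ℕ) :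
    ‖phiCoord (b := b) w a n‖ ≤ |a (blockIdx b n)| := by
  rw [phiCoord, norm_smul, Real.norm_eq_abs]
  calc |a (blockIdx b n)| * ‖((w (blockIdx b n) : ↥(c0Sum Xf)) : lp Xf ⊤) n‖
      ≤ |a (blockIdx b n)| * 1 := by
        apply mul_le_mul_of_nonneg_left _ (abs_nonneg _)
        exact le_trans (coord_le_norm _ n) (hwle _)
  _ = _ := mul_one _

lemma blockIdx_tendsto (hb : StrictMono b) : Tendsto (blockIdx b) atTop atTop := by
  rw [tendsto_atTop_atTop]
  intro j
  exact ⟨b j, fun n hn => le_blockIdx hb hn⟩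

lemma phiCoord_tendsto (hb : StrictMono b) (a : SeqC0) (hwle : ∀ j, ‖w j‖ ≤ 1) :
    Tendsto (fun n => ‖phiCoord (b := b) w a n‖) atTop (𝓝 0) := by
  apply squeeze_zero (fun n => norm_nonneg _) (phiCoord_norm_le w a hwle)
  have h1 : Tendsto (fun n => a (blockIdx b n)) atTop (𝓝 0) :=
    (seqC0_tendsto a).comp (blockIdx_tendsto (b := b) hb)
  simpa using h1.abs

/-- The block embedding of `SeqC0` into the `c₀`-sum. -/
def phiFun (hb : StrictMono b) (hw1 : ∀ j, ‖w j‖ = 1) (a : SeqC0) : ↥(c0Sum Xf) :=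
  mk' (phiCoord (b := b) w a)
    (phiCoord_tendsto w hb a (fun j => le_of_eq (hw1 j)))

lemma phiFun_coord (hb : StrictMono b) (hw1 : ∀ j, ‖w j‖ = 1) (a : SeqC0) (n : ℕ) :
    ((phiFun w hb hw1 a : ↥(c0Sum Xf)) : lp Xf ⊤) n
      = a (blockIdx b n) • ((w (blockIdx b n) : ↥(c0Sum Xf)) : lp Xf ⊤) n := rfl

lemma phiFun_norm (hb : StrictMono b) (hb0 : b 0 = 0)
    (hsupp : ∀ j n, (n < b j ∨ b (j+1) ≤ n) → ((w j : ↥(c0Sum Xf)) : lp Xf ⊤) n = 0)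
    (hw1 : ∀ j, ‖w j‖ = 1) (a : SeqC0) : ‖phiFun w hb hw1 a‖ = ‖a‖ := by
  apply le_antisymm
  · apply norm_le _ (norm_nonneg a)
    intro n
    calc ‖((phiFun w hb hw1 a : ↥(c0Sum Xf)) : lp Xf ⊤) n‖
        ≤ |a (blockIdx b n)| := phiCoord_norm_le w a (fun j => le_of_eq (hw1 j)) n
    _ ≤ ‖a‖ := seqC0_apply_le_norm a _
  · apply seqC0_norm_le _ (norm_nonneg _)
    intro j
    -- show |a j| ≤ ‖phiFun a‖ by looking at coordinates in the j-th block
    have key : ∀ η : ℝ, 0 < η → η < 1 → |a j| * (1 - η) ≤ ‖phiFun w hb hw1 a‖ := by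
      intro η hη1 hη2
      -- find a coordinate where `w j` is big
      obtain ⟨n, hn⟩ : ∃ n, 1 - η < ‖((w j : ↥(c0Sum Xf)) : lp Xf ⊤) n‖ := by
        by_contra hcon
        push_neg at hcon
        have := norm_le (w j) (by linarith) hcon
        rw [hw1 j] at this
        linarith
      have hne : ((w j : ↥(c0Sum Xf)) : lp Xf ⊤) n ≠ 0 := by
        intro h0
        rw [h0, norm_zero] at hn
        linarith
      have hblock : blockIdx b n = j := by
        have hmem : ¬(n < b j ∨ b (j+1) ≤ n) := fun h => hne (hsupp j n h)
        push_neg at hmem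
        exact blockIdx_eq hb hb0 (by omega) (by omega)
      calc |a j| * (1 - η) ≤ |a j| * ‖((w j : ↥(c0Sum Xf)) : lp Xf ⊤) n‖ :=
            mul_le_mul_of_nonneg_left hn.le (abs_nonneg _)
      _ = ‖((phiFun w hb hw1 a : ↥(c0Sum Xf)) : lp Xf ⊤) n‖ := by
            rw [phiFun_coord, hblock, norm_smul, Real.norm_eq_abs]
      _ ≤ ‖phiFun w hb hw1 a‖ := coord_le_norm _ n
    by_contra hcon
    push_neg at hcon
    have hpos : 0 < |a j| := lt_of_le_of_lt (norm_nonneg _) hcon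
    set η := (|a j| - ‖phiFun w hb hw1 a‖) / (2 * |a j|) with hband
    have hη1 : 0 < η := by
      apply div_pos (by linarith) (by linarith)
    have hη2 : η < 1 := by
      rw [div_lt_one (by linarith)]
      have := norm_nonneg (phiFun w hb hw1 a)
      linarith
    have := key η hη1 hη2
    rw [mul_sub, mul_one, hband] at this
    have harith : |a j| * ((|a j| - ‖phiFun w hb hw1 a‖) / (2 * |a j|))
        = (|a j| - ‖phiFun w hb hw1 a‖) / 2 := by
      field_simp
    rw [harith] at this
    linarith

/-- The block embedding as a linear isometry. -/
def phiLI (hb : StrictMono b) (hb0 : b 0 = 0)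
    (hsupp : ∀ j n, (n < b j ∨ b (j+1) ≤ n) → ((w j : ↥(c0Sum Xf)) : lp Xf ⊤) n = 0)
    (hw1 : ∀ j, ‖w j‖ = 1) : SeqC0 →ₗᵢ[ℝ] ↥(c0Sum Xf) where
  toLinearMap :=
    { toFun := phiFun w hb hw1
      map_add' := by
        intro a c
        apply eq_iff
        intro n
        rw [coord_add, phiFun_coord, phiFun_coord, phiFun_coord]
        have : (a + c) (blockIdx b n) = a (blockIdx b n) + c (blockIdx b n) := rfl
        rw [this, add_smul]
      map_smul' := by
        intro r a
        apply eq_iff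
        intro n
        rw [RingHom.id_apply, coord_smul, phiFun_coord, phiFun_coord]
        have : (r • a) (blockIdx b n) = r * a (blockIdx b n) := rfl
        rw [this, mul_smul] }
  norm_map' := phiFun_norm w hb hb0 hsupp hw1

lemma phiLI_apply (hb : StrictMono b) (hb0 : b 0 = 0)
    (hsupp : ∀ j n, (n < b j ∨ b (j+1) ≤ n) → ((w j : ↥(c0Sum Xf)) : lp Xf ⊤) n = 0)
    (hw1 : ∀ j, ‖w j‖ = 1) (a : SeqC0) : phiLI w hb hb0 hsupp hw1 a = phiFun w hb hw1 a := rfl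

/-- On finitely supported sequences, the block embedding is the finite sum of blocks. -/
lemma phiFun_finsupp (hb : StrictMono b) (hb0 : b 0 = 0)
    (hsupp : ∀ j n, (n < b j ∨ b (j+1) ≤ n) → ((w j : ↥(c0Sum Xf)) : lp Xf ⊤) n = 0)
    (hw1 : ∀ j, ‖w j‖ = 1) (a : SeqC0) (N : ℕ) (ha : ∀ j, N ≤ j → a j = 0) :
    phiFun w hb hw1 a = ∑ j ∈ Finset.range N, a j • w j := by
  apply eq_iff
  intro n
  rw [phiFun_coord, blocks_coord_sum w hb hb0 hsupp]
  by_cases hmem : blockIdx b n ∈ Finset.range N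
  · rw [if_pos hmem]
  · rw [if_neg hmem]
    have : N ≤ blockIdx b n := by
      by_contra hcon
      exact hmem (Finset.mem_range.mpr (by omega))
    rw [ha _ this, zero_smul]

end Phi
end CZero

section MainAux
open CZero

variable {Xf : ℕ → Type u} [∀ n, NormedAddCommGroup (Xf n)] [∀ n, NormedSpace ℝ (Xf n)]

/-- The top submodule is equivalent to the whole space. -/
def topCLE (Z : Type*) [NormedAddCommGroup Z] [NormedSpace ℝ Z] :
    (⊤ : Submodule ℝ Z) ≃L[ℝ] Z :=
  { Submodule.topEquiv with
    continuous_toFun := continuous_subtype_val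
    continuous_invFun := Continuous.subtype_mk continuous_id _ }

lemma uc_comp_incl {Y : Type u} [NormedAddCommGroup Y] [NormedSpace ℝ Y]
    [∀ n, CompleteSpace (Xf n)]
    (T : ↥(c0Sum Xf) →L[ℝ] Y) (hT : UnconditionallyConverging T) (k : ℕ) :
    UnconditionallyConverging (T.comp (incl k)) := by
  rintro ⟨M, hMc, ⟨e⟩, c, hcpos, hiso⟩
  apply hT
  refine ⟨M.map (inclLI (Xf := Xf) k).toLinearMap,
    LinearIsometry.isClosed_map _ M hMc,
    ⟨((LinearIsometry.mapEquiv (inclLI (Xf := Xf) k) M).symm).trans e⟩, c, hcpos, ?_⟩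
  rintro x hx
  obtain ⟨z, hz, rfl⟩ := Submodule.mem_map.mp hx
  have h1 : T ((inclLI (Xf := Xf) k).toLinearMap z) = (T.comp (incl k)) z := rfl
  rw [h1]
  calc c * ‖(inclLI (Xf := Xf) k).toLinearMap z‖ = c * ‖z‖ := by
        rw [show ‖(inclLI (Xf := Xf) k).toLinearMap z‖ = ‖z‖ from (inclLI (Xf := Xf) k).norm_map z]
  _ ≤ ‖(T.comp (incl k)) z‖ := hiso z hz

end MainAux

end Aux

open scoped Pointwise

set_option maxHeartbeats 1000000 in
theorem statement16 (Xf : ℕ → Type u) [∀ n, NormedAddCommGroup (Xf n)]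
    [∀ n, NormedSpace ℝ (Xf n)] [∀ n, CompleteSpace (Xf n)]
    (h : ∀ n, MemSpUK (Xf n)) :
    MemSpUK (c0Sum Xf) := by
  classical
  intro Y _ _ _ T hT
  -- each composition with a coordinate inclusion is compact
  have hcomp : ∀ k, IsCompact (closure ((T.comp (CZero.incl k)) '' Metric.closedBall 0 1)) :=
    fun k => h k Y (T.comp (CZero.incl k)) (uc_comp_incl T hT k)
  -- key approximation property
  have key : ∀ δ : ℝ, 0 < δ → ∃ N : ℕ, ∀ x : ↥(c0Sum Xf), ‖x‖ ≤ 1 →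
      ‖T x - T (CZero.trunc N x)‖ ≤ δ := by
    by_contra hcon
    push_neg at hcon
    obtain ⟨δ, hδpos, hfail⟩ := hcon
    -- Step: construct disjoint blocks on which T is big
    have step : ∀ n : ℕ, ∃ m : ℕ, ∃ v : ↥(c0Sum Xf), n < m ∧
        (∀ k, k < n ∨ m ≤ k → ((v : ↥(c0Sum Xf)) : lp Xf ⊤) k = 0) ∧
        ‖v‖ ≤ 1 ∧ δ/2 ≤ ‖T v‖ := by
      intro n
      obtain ⟨x, hx1, hx2⟩ := hfail n
      set v0 : ↥(c0Sum Xf) := x - CZero.trunc n x with hv0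
      have hv0coord : ∀ k, ((v0 : ↥(c0Sum Xf)) : lp Xf ⊤) k
          = if k < n then 0 else ((x : ↥(c0Sum Xf)) : lp Xf ⊤) k :=
        fun k => CZero.sub_trunc_coord n x k
      have hv0norm : ‖v0‖ ≤ 1 := by
        apply CZero.norm_le _ zero_le_one
        intro k
        rw [hv0coord]
        split
        · simp
        · exact le_trans (CZero.coord_le_norm x k) hx1
      have hTv0 : δ < ‖T v0‖ := by
        rw [hv0, map_sub]
        exact hx2
      -- find the tail cutoff
      set ρ : ℝ := δ / (2 * (‖T‖ + 1)) with hρ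
      have hρpos : 0 < ρ := by
        apply div_pos hδpos
        have := norm_nonneg T
        linarith
      obtain ⟨m₀, hm₀⟩ := (Metric.tendsto_nhds.mp (CZero.coord_tendsto v0) ρ
        hρpos).exists_forall_of_atTop
      set m : ℕ := max m₀ (n+1) with hm
      refine ⟨m, CZero.trunc m v0, by omega, ?_, ?_, ?_⟩
      · intro k hk
        rw [CZero.trunc_coord]
        rcases hk with hk | hk
        · rw [if_pos (by omega), hv0coord, if_pos hk]
        · rw [if_neg (by omega)]
      · exact le_trans (CZero.truncFun_norm_le m v0) hv0norm
      · -- T is still big on the truncation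
        have htail : ‖v0 - CZero.trunc m v0‖ ≤ ρ := by
          apply CZero.norm_le _ hρpos.le
          intro k
          rw [CZero.sub_trunc_coord]
          split
          · simpa using hρpos.le
          · rename_i hkm
            push_neg at hkm
            have := hm₀ k (by omega)
            rw [Real.dist_eq, sub_zero] at this
            exact le_of_lt (lt_of_le_of_lt (le_abs_self _) this)
        have hTtail : ‖T (v0 - CZero.trunc m v0)‖ ≤ δ/2 := by
          calc ‖T (v0 - CZero.trunc m v0)‖ ≤ ‖T‖ * ‖v0 - CZero.trunc m v0‖ := T.le_opNorm _
          _ ≤ ‖T‖ * ρ := mul_le_mul_of_nonneg_left htail (norm_nonneg T)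
          _ ≤ δ/2 := by
              rw [hρ]
              rw [div_eq_inv_mul, ← mul_assoc]
              have hT1 : 0 < ‖T‖ + 1 := by have := norm_nonneg T; linarith
              have h9 : ‖T‖ * (2 * (‖T‖ + 1))⁻¹ ≤ 2⁻¹ := by
                rw [mul_inv]
                rw [show ‖T‖ * (2⁻¹ * (‖T‖+1)⁻¹) = 2⁻¹ * (‖T‖ * (‖T‖+1)⁻¹) by ring]
                have h10 : ‖T‖ * (‖T‖+1)⁻¹ ≤ 1 := by
                  rw [← div_eq_mul_inv, div_le_one hT1]
                  linarith
                nlinarith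
              calc ‖T‖ * (2 * (‖T‖ + 1))⁻¹ * δ ≤ 2⁻¹ * δ :=
                    mul_le_mul_of_nonneg_right h9 hδpos.le
              _ = δ/2 := by ring
        have hsplit : T v0 - T (v0 - CZero.trunc m v0) = T (CZero.trunc m v0) := by
          rw [← map_sub]
          congr 1
          abel
        have := norm_sub_norm_le (T v0) (T (v0 - CZero.trunc m v0))
        rw [hsplit] at this
        linarith
    -- choose the blocks
    choose mfun vfun hlt hsupp0 hvle hTbig using step
    set b : ℕ → ℕ := fun j => Nat.rec 0 (fun _ prev => mfun prev) j with hbdef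
    have hbsucc : ∀ j, b (j+1) = mfun (b j) := fun j => rfl
    have hb : StrictMono b := strictMono_nat_of_lt_succ (fun j => by rw [hbsucc]; exact hlt (b j))
    have hb0 : b 0 = 0 := rfl
    set ww : ℕ → ↥(c0Sum Xf) := fun j => vfun (b j) with hwwdef
    have hsuppw : ∀ j n, (n < b j ∨ b (j+1) ≤ n) →
        ((ww j : ↥(c0Sum Xf)) : lp Xf ⊤) n = 0 := by
      intro j n hn
      apply hsupp0 (b j) n
      rw [hbsucc] at hn
      exact hn
    have hwle : ∀ j, ‖ww j‖ ≤ 1 := fun j => hvle (b j)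
    have hTww : ∀ j, δ/2 ≤ ‖T (ww j)‖ := fun j => hTbig (b j)
    -- the blocks are weakly null
    have hweakX : ∀ g : ↥(c0Sum Xf) →L[ℝ] ℝ, Tendsto (fun j => g (ww j)) atTop (𝓝 0) := by
      intro g
      have hsum : Summable (fun j => |g (ww j)|) := by
        apply summable_of_sum_range_le (c := ‖g‖) (fun j => abs_nonneg _)
        intro n
        set σ : ℕ → ℝ := fun j => if 0 ≤ g (ww j) then 1 else -1 with hσ
        have h1 : ∑ j ∈ Finset.range n, |g (ww j)| = g (∑ j ∈ Finset.range n, σ j • ww j) := by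
          rw [map_sum]
          apply Finset.sum_congr rfl
          intro j _
          rw [map_smul]
          simp only [smul_eq_mul, hσ]
          split
          · rename_i hge
            rw [abs_of_nonneg hge, one_mul]
          · rename_i hlt'
            push_neg at hlt'
            rw [abs_of_neg hlt']
            ring
        rw [h1]
        calc g (∑ j ∈ Finset.range n, σ j • ww j)
            ≤ |g (∑ j ∈ Finset.range n, σ j • ww j)| := le_abs_self _
        _ ≤ ‖g‖ * ‖∑ j ∈ Finset.range n, σ j • ww j‖ := g.le_opNorm _
        _ ≤ ‖g‖ * 1 := by
            apply mul_le_mul_of_nonneg_left _ (norm_nonneg g)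
            apply CZero.blocks_norm_sum_le ww hb hb0 hsuppw hwle _ _ zero_le_one
            intro j _
            rw [hσ]
            dsimp only
            split <;> simp
        _ = ‖g‖ := mul_one _
      exact squeeze_zero_norm (fun j => (Real.norm_eq_abs (g (ww j))).le)
        hsum.tendsto_atTop_zero
    -- the images are weakly null and bounded below
    set yy : ℕ → Y := fun j => T (ww j) with hyydef
    have hyweak : ∀ f : Y →L[ℝ] ℝ, Tendsto (fun j => f (yy j)) atTop (𝓝 0) := by
      intro f
      exact hweakX (f.comp T)
    have hynorm : ∀ j, δ/2 ≤ ‖yy j‖ := hTww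
    -- Mazur selection
    obtain ⟨φ, hφmono, hlow⟩ := mazur_selection yy (by linarith : (0:ℝ) < δ/2) hynorm hyweak
    -- normalized blocks along the subsequence
    have hwwnz : ∀ j, ww (φ j) ≠ 0 := by
      intro j h0
      have := hTww (φ j)
      rw [h0, map_zero, norm_zero] at this
      linarith
    set u : ℕ → ↥(c0Sum Xf) := fun j => ‖ww (φ j)‖⁻¹ • ww (φ j) with hudef
    have hwwpos : ∀ j, 0 < ‖ww (φ j)‖ := fun j => norm_pos_iff.mpr (hwwnz j)
    have hu1 : ∀ j, ‖u j‖ = 1 := by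
      intro j
      rw [hudef]
      dsimp only
      rw [norm_smul, norm_inv, norm_norm]
      exact inv_mul_cancel₀ (ne_of_gt (hwwpos j))
    set b' : ℕ → ℕ := fun j => if j = 0 then 0 else b (φ j) with hb'def
    have hb'0 : b' 0 = 0 := rfl
    have hb'succ : ∀ j, b' (j+1) = b (φ (j+1)) := fun j => rfl
    have hb' : StrictMono b' := by
      apply strictMono_nat_of_lt_succ
      intro j
      rcases Nat.eq_zero_or_pos j with rfl | hj
      · rw [hb'0, hb'succ]
        have h1 : 1 ≤ φ 1 := by
          have := hφmono (show 0 < 1 by omega)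
          omega
        calc 0 < 1 := one_pos
        _ ≤ φ 1 := h1
        _ ≤ b (φ 1) := hb.le_apply
      · rw [hb'succ, hb'def]
        dsimp only
        rw [if_neg (by omega : ¬ j = 0)]
        exact hb (hφmono (by omega))
    have husupp : ∀ j n, (n < b' j ∨ b' (j+1) ≤ n) →
        ((u j : ↥(c0Sum Xf)) : lp Xf ⊤) n = 0 := by
      intro j n hn
      have h1 : ((u j : ↥(c0Sum Xf)) : lp Xf ⊤) n
          = ‖ww (φ j)‖⁻¹ • ((ww (φ j) : ↥(c0Sum Xf)) : lp Xf ⊤) n := CZero.coord_smul _ _ _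
      rw [h1]
      have h2 : ((ww (φ j) : ↥(c0Sum Xf)) : lp Xf ⊤) n = 0 := by
        apply hsuppw (φ j) n
        rcases hn with hn | hn
        · left
          have hble : b' j ≤ b (φ j) := by
            rw [hb'def]
            dsimp only
            split
            · exact Nat.zero_le _
            · exact le_refl _
          omega
        · right
          rw [hb'succ] at hn
          calc b (φ j + 1) ≤ b (φ (j+1)) := hb.monotone (hφmono (by omega))
          _ ≤ n := hn
      rw [h2, smul_zero]
    -- the embedding of SeqC0
    set Φ := CZero.phiLI u hb' hb'0 husupp hu1 with hΦdef
    set M : Submodule ℝ (↥(c0Sum Xf)) := Submodule.map Φ.toLinearMap ⊤ with hMdef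
    have hMclosed : IsClosed (M : Set ↥(c0Sum Xf)) := by
      apply LinearIsometry.isClosed_map
      rw [Submodule.top_coe]
      exact isClosed_univ
    have hMequiv : Nonempty (M ≃L[ℝ] SeqC0) :=
      ⟨((LinearIsometry.mapEquiv Φ ⊤).symm).trans (topCLE SeqC0)⟩
    -- T is an isomorphism on M
    have hclaim : ∀ a : SeqC0, δ/8 * ‖a‖ ≤ ‖T (Φ a)‖ := by
      set S : Set SeqC0 := {a | δ/8 * ‖a‖ ≤ ‖T (Φ a)‖} with hSdef
      have hSclosed : IsClosed S := by
        apply isClosed_le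
        · exact continuous_const.mul continuous_norm
        · exact (T.continuous.comp Φ.continuous).norm
      have htrunc : ∀ (a : SeqC0) (N : ℕ), CZero.truncC0 a N ∈ S := by
        intro a N
        set aN := CZero.truncC0 a N with haN
        have haNsupp : ∀ j, N ≤ j → aN j = 0 := by
          intro j hj
          rw [haN, CZero.truncC0_apply, if_neg (by omega)]
        have hΦaN : Φ aN = ∑ j ∈ Finset.range N, aN j • u j := by
          rw [hΦdef, CZero.phiLI_apply]
          exact CZero.phiFun_finsupp u hb' hb'0 husupp hu1 aN N haNsupp
        have hTΦaN : T (Φ aN)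
            = ∑ j ∈ Finset.range N, (aN j * ‖ww (φ j)‖⁻¹) • yy (φ j) := by
          rw [hΦaN, map_sum]
          apply Finset.sum_congr rfl
          intro j _
          rw [map_smul, hudef]
          simp only [map_smul]
          rw [smul_smul, hyydef]
        have hbig : ∀ j, j < N → δ/8 * |aN j| ≤ ‖T (Φ aN)‖ := by
          intro j hj
          have h1 := hlow (fun i => aN i * ‖ww (φ i)‖⁻¹) N j hj
          rw [← hTΦaN] at h1
          have h2 : |aN j| ≤ |aN j * ‖ww (φ j)‖⁻¹| := by
            rw [abs_mul, abs_of_pos (inv_pos.mpr (hwwpos j))]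
            have hinv : 1 ≤ ‖ww (φ j)‖⁻¹ := by
              rw [le_inv_comm₀ one_pos (hwwpos j)]
              simpa using hwle (φ j)
            calc |aN j| = |aN j| * 1 := (mul_one _).symm
            _ ≤ |aN j| * ‖ww (φ j)‖⁻¹ := mul_le_mul_of_nonneg_left hinv (abs_nonneg _)
          calc δ/8 * |aN j| = δ/2/4 * |aN j| := by ring_nf
          _ ≤ δ/2/4 * |aN j * ‖ww (φ j)‖⁻¹| :=
              mul_le_mul_of_nonneg_left h2 (by linarith)
          _ ≤ ‖T (Φ aN)‖ := h1
        show δ/8 * ‖aN‖ ≤ ‖T (Φ aN)‖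
        have hc8 : (0:ℝ) < δ/8 := by linarith
        have hnorm8 : ‖aN‖ ≤ (δ/8)⁻¹ * ‖T (Φ aN)‖ := by
          apply CZero.seqC0_norm_le _ (by positivity)
          intro j
          by_cases hj : j < N
          · have := hbig j hj
            rw [← le_inv_mul_iff₀ hc8] at this
            exact this
          · rw [haNsupp j (by omega)]
            simp only [abs_zero]
            positivity
        calc δ/8 * ‖aN‖ ≤ δ/8 * ((δ/8)⁻¹ * ‖T (Φ aN)‖) :=
              mul_le_mul_of_nonneg_left hnorm8 hc8.le
        _ = ‖T (Φ aN)‖ := by field_simp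
      intro a
      have hmem : a ∈ closure S := by
        rw [Metric.mem_closure_iff]
        intro ε hε
        obtain ⟨N, hNa⟩ := CZero.truncC0_close a (show (0:ℝ) < ε/2 by linarith)
        refine ⟨CZero.truncC0 a N, htrunc a N, ?_⟩
        rw [dist_eq_norm]
        calc ‖a - CZero.truncC0 a N‖ ≤ ε/2 := hNa
        _ < ε := by linarith
      rwa [hSclosed.closure_eq] at hmem
    -- contradiction with unconditional convergence
    apply hT
    refine ⟨M, hMclosed, hMequiv, δ/8, by linarith, ?_⟩
    rintro x hx
    obtain ⟨a, _, rfl⟩ := Submodule.mem_map.mp hx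
    have h1 : ‖Φ.toLinearMap a‖ = ‖a‖ := Φ.norm_map a
    rw [h1]
    exact hclaim a

  -- conclude compactness
  show IsCompact (closure (⇑T '' Metric.closedBall 0 1))
  apply TotallyBounded.isCompact_of_isClosed _ isClosed_closure
  apply TotallyBounded.closure
  rw [Metric.totallyBounded_iff]
  intro r hr
  obtain ⟨N, hN⟩ := key (r/3) (by linarith)
  -- the compact sets
  set KS : ℕ → Set Y := fun k => closure ((T.comp (CZero.incl k)) '' Metric.closedBall 0 1)
    with hKS
  set CS : ℕ → Set Y := fun n => Nat.rec {0} (fun k S => S + KS k) n with hCS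
  have hCSsucc : ∀ n, CS (n+1) = CS n + KS n := fun n => rfl
  have hCScompact : ∀ n, IsCompact (CS n) := by
    intro n
    induction n with
    | zero => exact isCompact_singleton
    | succ n ih => rw [hCSsucc]; exact ih.add (hcomp n)
  have hmem : ∀ (n : ℕ) (x : ↥(c0Sum Xf)), ‖x‖ ≤ 1 → T (CZero.trunc n x) ∈ CS n := by
    intro n x hx
    induction n with
    | zero =>
      have h0 : CZero.trunc 0 x = 0 := by
        apply CZero.eq_iff
        intro n
        rw [CZero.trunc_coord]
        simp only [Nat.not_lt_zero, if_false]
        exact (map_zero (CZero.evalAM (Xf := Xf) n)).symm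
      rw [h0, map_zero]
      exact Set.mem_singleton _
    | succ n ih =>
      have h1 : CZero.trunc (n+1) x = CZero.trunc n x + CZero.incl n (CZero.proj n x) := by
        rw [CZero.trunc_eq_sum, CZero.trunc_eq_sum, Finset.sum_range_succ]
      rw [h1, map_add, hCSsucc]
      apply Set.add_mem_add ih
      apply subset_closure
      refine ⟨CZero.proj n x, ?_, rfl⟩
      rw [Metric.mem_closedBall, dist_zero_right]
      calc ‖CZero.proj n x‖ ≤ ‖x‖ := by
            rw [CZero.proj_eq]; exact CZero.coord_le_norm x n
      _ ≤ 1 := hx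
  -- extract a finite net from the compact set
  obtain ⟨t, htfin, htcov⟩ := (Metric.totallyBounded_iff.mp
    (hCScompact N).totallyBounded) (r/3) (by linarith)
  refine ⟨t, htfin, ?_⟩
  rintro z ⟨x, hxball, rfl⟩
  have hx1 : ‖x‖ ≤ 1 := by
    rw [Metric.mem_closedBall, dist_zero_right] at hxball; exact hxball
  have h2 : T (CZero.trunc N x) ∈ CS N := hmem N x hx1
  obtain ⟨y, hyt, hy⟩ : ∃ y ∈ t, T (CZero.trunc N x) ∈ Metric.ball y (r/3) := by
    have := htcov h2
    simpa using this
  refine Set.mem_iUnion₂.mpr ⟨y, hyt, ?_⟩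
  rw [Metric.mem_ball]
  calc dist (T x) y ≤ dist (T x) (T (CZero.trunc N x)) + dist (T (CZero.trunc N x)) y :=
        dist_triangle _ _ _
  _ ≤ r/3 + dist (T (CZero.trunc N x)) y := by
      apply add_le_add_left
      rw [dist_eq_norm]
      exact hN x hx1
  _ < r/3 + r/3 := by
      apply add_lt_add_right
      exact Metric.mem_ball.mp hy
  _ < r := by linarith
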